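/- arXiv:1901.07653 — 4 statements merged into one kernel-verified Lean document; each statement's English description precedes it below -/
import Mathlib

section
/- Let H be an n×n Hermitian complex matrix and φ ∈ ℂⁿ a nonzero vector. Then the Rayleigh quotient of the imaginary-time-evolved vector, namely the function β ↦ ⟨exp(−βH)φ, H exp(−βH)φ⟩ / ‖exp(−βH)φ‖², is monotone nonincreasing on ℝ. -/
open scoped InnerProductSpace
open NormedSpace

/-! If `ψ' = -T ψ` with `T` symmetric, then `N = re ⟪T ψ, ψ⟫` and `D = ‖ψ‖²` satisfy
`N' = -2 ‖T ψ‖²` and `D' = -2 N`, so `(N / D)' = 2 (N² - ‖ψ‖² ‖T ψ‖²) / D² ≤ 0` by Cauchy–Schwarz.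
The curve `β ↦ exp (-β H) φ` solves this equation and never vanishes, since `exp (-β H)` is
invertible. -/

namespace ContinuousLinearMap

variable {𝕜 E : Type*} [RCLike 𝕜] [NormedAddCommGroup E] [InnerProductSpace 𝕜 E]

theorem reApplyInnerSelf_sq_le (T : E →L[𝕜] E) (x : E) :
    T.reApplyInnerSelf x ^ 2 ≤ ‖x‖ ^ 2 * ‖T x‖ ^ 2 := by
  have h : |T.reApplyInnerSelf x| ≤ ‖x‖ * ‖T x‖ :=
    (RCLike.abs_re_le_norm _).trans ((norm_inner_le_norm _ _).trans_eq (mul_comm _ _))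
  rw [← mul_pow, ← sq_abs]
  exact pow_le_pow_left₀ (abs_nonneg _) h 2

variable [NormedSpace ℝ E] {T : E →L[𝕜] E} {ψ : ℝ → E}

theorem hasDerivAt_norm_sq_of_hasDerivAt_neg_apply {β : ℝ} (hψ : HasDerivAt ψ (-T (ψ β)) β) :
    HasDerivAt (fun t => ‖ψ t‖ ^ 2) (-2 * T.reApplyInnerSelf (ψ β)) β := by
  have h := (RCLike.reCLM (K := 𝕜)).hasFDerivAt.comp_hasDerivAt β (hψ.inner 𝕜 hψ)
  simp only [Function.comp_def, RCLike.reCLM_apply, inner_self_eq_norm_sq] at h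
  refine h.congr_deriv ?_
  rw [reApplyInnerSelf_apply, inner_neg_right, inner_neg_left, map_add, map_neg, map_neg,
    inner_re_symm (ψ β)]
  ring

variable [IsScalarTower ℝ 𝕜 E]

theorem hasDerivAt_reApplyInnerSelf_of_hasDerivAt_neg_apply (hT : (T : E →ₗ[𝕜] E).IsSymmetric)
    {β : ℝ} (hψ : HasDerivAt ψ (-T (ψ β)) β) :
    HasDerivAt (fun t => T.reApplyInnerSelf (ψ t)) (-2 * ‖T (ψ β)‖ ^ 2) β := by
  have hTψ : HasDerivAt (fun t => T (ψ t)) (-T (T (ψ β))) β := by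
    simpa [Function.comp_def] using (T.restrictScalars ℝ).hasFDerivAt.comp_hasDerivAt β hψ
  have h := (RCLike.reCLM (K := 𝕜)).hasFDerivAt.comp_hasDerivAt β (hTψ.inner 𝕜 hψ)
  simp only [Function.comp_def, RCLike.reCLM_apply, ← reApplyInnerSelf_apply] at h
  have hsymm : ⟪T (T (ψ β)), ψ β⟫_𝕜 = ⟪T (ψ β), T (ψ β)⟫_𝕜 := hT _ _
  refine h.congr_deriv ?_
  rw [inner_neg_right, inner_neg_left, hsymm, map_add, map_neg, inner_self_eq_norm_sq]
  ring

theorem antitone_rayleighQuotient_of_hasDerivAt (hT : (T : E →ₗ[𝕜] E).IsSymmetric)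
    (hψ : ∀ β, HasDerivAt ψ (-T (ψ β)) β) (hψ0 : ∀ β, ψ β ≠ 0) :
    Antitone fun β => T.rayleighQuotient (ψ β) := by
  have hquot β : HasDerivAt (fun t => T.rayleighQuotient (ψ t))
      ((-2 * ‖T (ψ β)‖ ^ 2 * ‖ψ β‖ ^ 2 - T.reApplyInnerSelf (ψ β) * (-2 * T.reApplyInnerSelf (ψ β)))
        / (‖ψ β‖ ^ 2) ^ 2) β :=
    (hasDerivAt_reApplyInnerSelf_of_hasDerivAt_neg_apply hT (hψ β)).div
      (hasDerivAt_norm_sq_of_hasDerivAt_neg_apply (hψ β)) (by simpa using hψ0 β)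
  refine antitone_of_deriv_nonpos (fun β => (hquot β).differentiableAt) fun β => ?_
  rw [(hquot β).deriv]
  refine div_nonpos_of_nonpos_of_nonneg ?_ (sq_nonneg _)
  nlinarith [T.reApplyInnerSelf_sq_le (ψ β)]

end ContinuousLinearMap

namespace Matrix

variable {𝕜 ι : Type*} [RCLike 𝕜] [Fintype ι] [DecidableEq ι]

theorem toEuclideanLin_exp_apply_ne_zero (A : Matrix ι ι 𝕜) {φ : EuclideanSpace 𝕜 ι}
    (hφ : φ ≠ 0) : toEuclideanLin (exp A) φ ≠ 0 :=
  have hinj : Function.Injective (toEuclideanCLM (𝕜 := 𝕜) (exp A)) :=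
    (ContinuousLinearMap.isUnit_iff_bijective.mp ((isUnit_exp A).map toEuclideanCLM)).injective
  hinj.ne_iff' (map_zero _) |>.mpr hφ

-- Any algebra norm on matrices will do: it only serves to differentiate `exp`.
attribute [local instance] Matrix.linftyOpNormedAddCommGroup Matrix.linftyOpNormedRing
  Matrix.linftyOpNormedAlgebra

theorem hasDerivAt_toEuclideanLin_exp_smul_apply (A : Matrix ι ι 𝕜) (φ : EuclideanSpace 𝕜 ι)
    (u : 𝕜) :
    HasDerivAt (fun u : 𝕜 => toEuclideanLin (exp (u • A)) φ)
      (toEuclideanLin A (toEuclideanLin (exp (u • A)) φ)) u := by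
  let evalφ : Matrix ι ι 𝕜 →L[𝕜] EuclideanSpace 𝕜 ι :=
    ((toEuclideanLin : Matrix ι ι 𝕜 ≃ₗ[𝕜] _).toLinearMap.flip φ).toContinuousLinearMap
  refine (evalφ.hasFDerivAt.comp_hasDerivAt u (hasDerivAt_exp_smul_const' A u)).congr_deriv ?_
  show toEuclideanLin (A * exp (u • A)) φ = _
  simp

theorem hasDerivAt_toEuclideanLin_exp_neg_smul_apply (A : Matrix ι ι 𝕜)
    (φ : EuclideanSpace 𝕜 ι) (β : ℝ) :
    HasDerivAt (fun t : ℝ => toEuclideanLin (exp ((-t : 𝕜) • A)) φ)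
      (-toEuclideanLin A (toEuclideanLin (exp ((-β : 𝕜) • A)) φ)) β := by
  have hneg : HasDerivAt (fun t : ℝ => (-t : 𝕜)) (-1) β := by
    simpa [Pi.neg_def] using ((RCLike.ofRealCLM (K := 𝕜)).hasDerivAt (x := β)).neg
  simpa [Function.comp_def] using
    (hasDerivAt_toEuclideanLin_exp_smul_apply A φ (-β : 𝕜)).scomp β hneg

end Matrix

/-- The Rayleigh quotient (energy expectation value) is monotone nonincreasing along
exact imaginary-time evolution. -/
theorem rayleigh_quotient_antitone_along_imaginary_time
    {n : ℕ} (H : Matrix (Fin n) (Fin n) ℂ) (hH : H.IsHermitian)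
    (φ : EuclideanSpace ℂ (Fin n)) (hφ : φ ≠ 0) :
    Antitone (fun β : ℝ =>
      RCLike.re (⟪Matrix.toEuclideanLin (exp ((-β : ℂ) • H)) φ,
          Matrix.toEuclideanLin H (Matrix.toEuclideanLin (exp ((-β : ℂ) • H)) φ)⟫_ℂ) /
        ‖Matrix.toEuclideanLin (exp ((-β : ℂ) • H)) φ‖ ^ 2) := by
  have h := ContinuousLinearMap.antitone_rayleighQuotient_of_hasDerivAt
    (T := Matrix.toEuclideanCLM (n := Fin n) (𝕜 := ℂ) H)
    (Matrix.isSymmetric_toEuclideanLin_iff.mpr hH)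
    (Matrix.hasDerivAt_toEuclideanLin_exp_neg_smul_apply H φ)
    fun β => Matrix.toEuclideanLin_exp_apply_ne_zero _ hφ
  simp only [ContinuousLinearMap.rayleighQuotient, ContinuousLinearMap.reApplyInnerSelf_apply,
    inner_re_symm] at h
  exact h
end

section
/- Let A₁, …, A_m be n×n complex matrices. Then the Trotter product (exp(A₁/k) · exp(A₂/k) ⋯ exp(A_m/k))^k converges to exp(A₁ + A₂ + ⋯ + A_m) as k → ∞. -/
/-!
Put `S = ∑ i, A i`, `x_k = ∏ i, exp (A i / k)` and `y_k = exp (S / k)`, so that `y_k ^ k = exp S`.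
Since `t ↦ ∏ i, exp (t • A i)` and `t ↦ exp (t • S)` both have derivative `S` at `0`, we have
`k (x_k - 1) → S` and `k (y_k - 1) → S`; hence `‖x_k‖, ‖y_k‖ ≤ exp (C / k)` for some `C`, and
`k ‖x_k - y_k‖ → 0`. Telescoping `x_k ^ k - y_k ^ k` gives
`‖x_k ^ k - exp S‖ ≤ k exp (C / k) ^ (k - 1) ‖x_k - y_k‖ ≤ exp C · k ‖x_k - y_k‖ → 0`.
-/

open NormedSpace Filter Topology

section NormedRing

variable {𝔸 : Type*} [NormedRing 𝔸]

theorem norm_pow_succ_sub_pow_succ_le {a b : 𝔸} {M : ℝ} (ha : ‖a‖ ≤ M) (hb : ‖b‖ ≤ M) (k : ℕ) :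
    ‖a ^ (k + 1) - b ^ (k + 1)‖ ≤ (k + 1) * M ^ k * ‖a - b‖ := by
  induction k with
  | zero => simp
  | succ k ih =>
    have hbk : ‖b ^ (k + 1)‖ ≤ M ^ (k + 1) :=
      (norm_pow_le' b k.succ_pos).trans (pow_le_pow_left₀ (norm_nonneg b) hb _)
    calc ‖a ^ (k + 2) - b ^ (k + 2)‖
        = ‖a * (a ^ (k + 1) - b ^ (k + 1)) + (a - b) * b ^ (k + 1)‖ := by
          rw [mul_sub, sub_mul, ← pow_succ', ← pow_succ', sub_add_sub_cancel]
      _ ≤ ‖a‖ * ‖a ^ (k + 1) - b ^ (k + 1)‖ + ‖a - b‖ * ‖b ^ (k + 1)‖ :=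
          (norm_add_le _ _).trans (add_le_add (norm_mul_le _ _) (norm_mul_le _ _))
      _ ≤ M * ((k + 1) * M ^ k * ‖a - b‖) + ‖a - b‖ * M ^ (k + 1) := by
          gcongr; exact (norm_nonneg a).trans ha
      _ = (↑(k + 1) + 1) * M ^ (k + 1) * ‖a - b‖ := by push_cast; ring

variable [NormOneClass 𝔸]

theorem norm_le_exp_of_norm_sub_one_le {a : 𝔸} {r : ℝ} (h : ‖a - 1‖ ≤ r) : ‖a‖ ≤ Real.exp r :=
  calc ‖a‖ ≤ ‖a - 1‖ + ‖(1 : 𝔸)‖ := norm_le_norm_sub_add a 1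
    _ ≤ r + 1 := by rw [norm_one]; gcongr
    _ ≤ Real.exp r := Real.add_one_le_exp r

theorem norm_pow_sub_pow_le_of_norm_sub_one_le {a b : 𝔸} {C : ℝ} {k : ℕ} (hk : 0 < k)
    (ha : ‖a - 1‖ ≤ C / k) (hb : ‖b - 1‖ ≤ C / k) :
    ‖a ^ k - b ^ k‖ ≤ Real.exp C * (k * ‖a - b‖) := by
  obtain ⟨j, rfl⟩ : ∃ j, k = j + 1 := Nat.exists_eq_succ_of_ne_zero hk.ne'
  have hC : 0 ≤ C / (j + 1 : ℕ) := (norm_nonneg _).trans ha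
  have hexp : Real.exp (C / (j + 1 : ℕ)) ^ j ≤ Real.exp C := by
    rw [← Real.exp_nat_mul, Real.exp_le_exp]
    calc j * (C / (j + 1 : ℕ)) ≤ (j + 1 : ℕ) * (C / (j + 1 : ℕ)) := by gcongr; linarith
      _ = C := mul_div_cancel₀ _ (by positivity)
  calc ‖a ^ (j + 1) - b ^ (j + 1)‖
      ≤ (j + 1) * Real.exp (C / (j + 1 : ℕ)) ^ j * ‖a - b‖ :=
        norm_pow_succ_sub_pow_succ_le (norm_le_exp_of_norm_sub_one_le ha)
          (norm_le_exp_of_norm_sub_one_le hb) j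
    _ ≤ (j + 1) * Real.exp C * ‖a - b‖ := by gcongr
    _ = Real.exp C * ((j + 1 : ℕ) * ‖a - b‖) := by push_cast; ring

end NormedRing

section Calculus

variable {𝕂 : Type*} [RCLike 𝕂]

theorem tendsto_natCast_inv_nhdsNE_zero :
    Tendsto (fun k : ℕ => (k : 𝕂)⁻¹) atTop (𝓝[≠] 0) :=
  tendsto_nhdsWithin_iff.mpr ⟨tendsto_inv_atTop_nhds_zero_nat,
    (eventually_ne_atTop 0).mono fun k hk => by simpa using hk⟩

theorem HasDerivAt.tendsto_natCast_smul_sub {E : Type*} [NormedAddCommGroup E] [NormedSpace 𝕂 E]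
    {f : 𝕂 → E} {f' : E} (hf : HasDerivAt f f' 0) :
    Tendsto (fun k : ℕ => (k : 𝕂) • (f (k : 𝕂)⁻¹ - f 0)) atTop (𝓝 f') := by
  simpa [Function.comp_def] using hf.tendsto_slope_zero.comp tendsto_natCast_inv_nhdsNE_zero

variable {𝔸 : Type*} [NormedRing 𝔸] [NormedAlgebra 𝕂 𝔸]

theorem hasDerivAt_ofFn_prod_of_eq_one {m : ℕ} {f : Fin m → 𝕂 → 𝔸} {f' : Fin m → 𝔸} {t : 𝕂}
    (hf_one : ∀ i, f i t = 1) (hf : ∀ i, HasDerivAt (f i) (f' i) t) :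
    HasDerivAt (fun s => (List.ofFn fun i => f i s).prod) (∑ i, f' i) t := by
  induction m with
  | zero => simpa using hasDerivAt_const t (1 : 𝔸)
  | succ m ih =>
    have htail := ih (fun i => hf_one i.succ) (fun i => hf i.succ)
    have hprod := (hf 0).mul htail
    simp only [List.ofFn_succ, List.prod_cons, Fin.sum_univ_succ]
    simpa [hf_one, Pi.mul_def] using hprod

variable [NormOneClass 𝔸] [CompleteSpace 𝔸]

theorem tendsto_pow_of_tendsto_natCast_smul_sub_one {x : ℕ → 𝔸} {S : 𝔸}
    (hx : Tendsto (fun k : ℕ => (k : 𝕂) • (x k - 1)) atTop (𝓝 S)) :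
    Tendsto (fun k : ℕ => x k ^ k) atTop (𝓝 (exp S)) := by
  set y : ℕ → 𝔸 := fun k => exp ((k : 𝕂)⁻¹ • S)
  have hy : Tendsto (fun k : ℕ => (k : 𝕂) • (y k - 1)) atTop (𝓝 S) := by
    simpa using (hasDerivAt_exp_smul_const (𝕂 := 𝕂) S 0).tendsto_natCast_smul_sub
  have hy_pow : ∀ k ≠ 0, y k ^ k = exp S := fun k hk => by
    -- `exp_nsmul` is stated for normed `ℚ`-algebras
    let : NormedAlgebra ℚ 𝔸 := .restrictScalars ℚ 𝕂 𝔸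
    rw [← exp_nsmul, ← Nat.cast_smul_eq_nsmul 𝕂, smul_smul, mul_inv_cancel₀ (by exact_mod_cast hk),
      one_smul]
  have hdiff : Tendsto (fun k : ℕ => Real.exp (‖S‖ + 1) * (k * ‖x k - y k‖)) atTop (𝓝 0) := by
    simpa [← smul_sub, norm_smul] using (hx.sub hy).norm.const_mul (Real.exp (‖S‖ + 1))
  have hnear : ∀ {z : ℕ → 𝔸}, Tendsto (fun k : ℕ => (k : 𝕂) • (z k - 1)) atTop (𝓝 S) →
      ∀ᶠ k : ℕ in atTop, ‖z k - 1‖ ≤ (‖S‖ + 1) / k := fun hz => by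
    filter_upwards [hz.norm.eventually (eventually_le_nhds (lt_add_one ‖S‖)),
      eventually_gt_atTop 0] with k hk hk0
    rw [norm_smul, RCLike.norm_natCast] at hk
    rwa [le_div_iff₀' (by exact_mod_cast hk0)]
  refine tendsto_iff_norm_sub_tendsto_zero.mpr <| squeeze_zero' (.of_forall fun _ => norm_nonneg _)
    ?_ hdiff
  filter_upwards [hnear hx, hnear hy, eventually_gt_atTop 0] with k hxk hyk hk
  rw [← hy_pow k hk.ne']
  exact norm_pow_sub_pow_le_of_norm_sub_one_le hk hxk hyk

end Calculus

/-- The Lie–Trotter product formula for matrices: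
`(exp(A₁/k) ⋯ exp(A_m/k))^k → exp(A₁ + ⋯ + A_m)` as `k → ∞`. -/
theorem lie_trotter_product_formula
    {n m : ℕ} (A : Fin m → Matrix (Fin n) (Fin n) ℂ) :
    Tendsto
      (fun k : ℕ => (List.ofFn (fun i => exp ((k : ℂ)⁻¹ • A i))).prod ^ k)
      atTop
      (nhds (exp (∑ i, A i))) := by
  -- the zero-dimensional matrix ring is trivial, and `NormOneClass` fails for it
  cases isEmpty_or_nonempty (Fin n)
  · exact tendsto_const_nhds.congr fun _ => Subsingleton.elim _ _
  let : NormedRing (Matrix (Fin n) (Fin n) ℂ) := Matrix.linftyOpNormedRing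
  let : NormedAlgebra ℂ (Matrix (Fin n) (Fin n) ℂ) := Matrix.linftyOpNormedAlgebra
  have hderiv := hasDerivAt_ofFn_prod_of_eq_one (f := fun i (t : ℂ) => exp (t • A i)) (f' := A)
    (t := 0) (fun i => by simp)
    fun i => (hasDerivAt_exp_smul_const (𝕂 := ℂ) (A i) 0).congr_deriv (by simp)
  refine tendsto_pow_of_tendsto_natCast_smul_sub_one (𝕂 := ℂ) ?_
  simpa using hderiv.tendsto_natCast_smul_sub
end

section
/- Let H be an n×n Hermitian complex matrix, φ ∈ ℂⁿ, and τ ∈ ℝ. Define the imaginary-time vectors Φ_l = exp(−l·τ·H)φ for natural numbers l. Then for all natural numbers l, l′, r with l + l′ = 2r, the Hamiltonian matrix element satisfies ⟨Φ_l, H Φ_{l′}⟩ = ⟨Φ_r, H Φ_r⟩. -/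
open scoped InnerProductSpace
open NormedSpace

/-! Each `exp (-lτH)` is Hermitian and commutes with `H`, so
`⟪Φ l, H Φ l'⟫ = ⟪φ, H exp (-(l + l')τH) φ⟫`, which depends on `l, l'` only through `l + l'`. -/

namespace Matrix

variable {𝕜 ι : Type*} [RCLike 𝕜] [Fintype ι] [DecidableEq ι]

theorem exp_smul_mul_mul_exp_smul (H : Matrix ι ι 𝕜) (a b : 𝕜) :
    exp (a • H) * H * exp (b • H) = H * exp ((a + b) • H) := by
  have hcomm : Commute (a • H) (b • H) := ((Commute.refl H).smul_left a).smul_right b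
  rw [((Commute.refl H).smul_left a).exp_left.eq, mul_assoc,
    ← exp_add_of_commute _ _ hcomm, add_smul]

theorem IsHermitian.inner_toEuclideanLin_exp_smul {H : Matrix ι ι 𝕜} (hH : H.IsHermitian)
    {a : 𝕜} (ha : IsSelfAdjoint a) (b : 𝕜) (x y : EuclideanSpace 𝕜 ι) :
    ⟪toEuclideanLin (NormedSpace.exp (a • H)) x,
        toEuclideanLin H (toEuclideanLin (NormedSpace.exp (b • H)) y)⟫_𝕜
      = ⟪x, toEuclideanLin (H * NormedSpace.exp ((a + b) • H)) y⟫_𝕜 := by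
  rw [isSymmetric_toEuclideanLin_iff.mpr (hH.smul ha).exp, ← exp_smul_mul_mul_exp_smul]
  simp only [toLpLin_mul_same, LinearMap.comp_apply]

end Matrix

/-- QLanczos Hamiltonian matrix element identity: for imaginary-time vectors
`Φ_l = exp(−lτH)φ` with `H` Hermitian, `⟨Φ_l, H Φ_{l′}⟩ = ⟨Φ_r, H Φ_r⟩` whenever
`l + l′ = 2r`. -/
theorem qlanczos_hamiltonian_matrix_element_identity
    {n : ℕ} (H : Matrix (Fin n) (Fin n) ℂ) (hH : H.IsHermitian)
    (φ : EuclideanSpace ℂ (Fin n)) (τ : ℝ)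
    (Φ : ℕ → EuclideanSpace ℂ (Fin n))
    (hΦ : Φ = fun l : ℕ => Matrix.toEuclideanLin (exp ((-(l : ℂ) * (τ : ℂ)) • H)) φ)
    (l l' r : ℕ) (h : l + l' = 2 * r) :
    ⟪Φ l, Matrix.toEuclideanLin H (Φ l')⟫_ℂ
      = ⟪Φ r, Matrix.toEuclideanLin H (Φ r)⟫_ℂ := by
  subst hΦ
  have hsa (k : ℕ) : IsSelfAdjoint (-(k : ℂ) * τ) :=
    (IsSelfAdjoint.natCast k).neg.mul (Complex.conj_ofReal τ)
  have hsum : -(l : ℂ) * τ + -(l' : ℂ) * τ = -(r : ℂ) * τ + -(r : ℂ) * τ := by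
    linear_combination (-(τ : ℂ)) * (by exact_mod_cast h : (l : ℂ) + l' = 2 * r)
  simp only [hH.inner_toEuclideanLin_exp_smul (hsa _), hsum]
end

section
/- Let H be an n×n Hermitian complex matrix, β ∈ ℝ, and let (e_i) be an orthonormal basis of ℂⁿ. For each basis index i define P_i = ⟨e_i, exp(−βH) e_i⟩ (a positive real number) and the METTS vector φ_i = P_i^{−1/2} · exp(−(β/2)H) e_i. Then for every basis index i′: Σ_i P_i · |⟨e_{i′}, φ_i⟩|² = P_{i′}. In particular, the Markov chain that from state i collapses to i′ with probability p(i → i′) = |⟨e_{i′}, φ_i⟩|² leaves the Gibbs distribution (P_i / Σ_j P_j) invariant. -/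
open scoped InnerProductSpace
open NormedSpace

/-!
With `T = exp (-(β/2) H)`, Hermitian and invertible, `exp (-β H) = T²` gives
`P i = ⟪e i, T² e i⟫ = ‖T e i‖² > 0` and `φ i = T e i / ‖T e i‖`. Hence
`P i * ‖⟪e i', φ i⟫‖² = ‖⟪e i', T e i⟫‖² = ‖⟪e i, T e i'⟫‖²`, and Parseval sums this over `i`
to `‖T e i'‖² = P i'`.
-/

section
variable {𝕜 E ι : Type*} [RCLike 𝕜] [NormedAddCommGroup E] [InnerProductSpace 𝕜 E]

lemma LinearMap.IsSymmetric.inner_apply_apply_self {T : E →ₗ[𝕜] E} (hT : T.IsSymmetric)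
    (v : E) : ⟪v, T (T v)⟫_𝕜 = ((‖T v‖ ^ 2 : ℝ) : 𝕜) := by
  rw [← hT, inner_self_eq_norm_sq_to_K]; norm_cast

lemma norm_sq_mul_norm_inner_inv_norm_smul_sq (x y : E) :
    ‖y‖ ^ 2 * ‖⟪x, ((‖y‖⁻¹ : ℝ) : 𝕜) • y⟫_𝕜‖ ^ 2 = ‖⟪x, y⟫_𝕜‖ ^ 2 := by
  rcases eq_or_ne y 0 with rfl | hy
  · simp
  rw [inner_smul_right, norm_mul, mul_pow, RCLike.norm_ofReal, abs_inv, abs_norm, ← mul_assoc,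
    ← mul_pow, mul_inv_cancel₀ (norm_ne_zero_iff.mpr hy), one_pow, one_mul]

lemma LinearMap.IsSymmetric.sum_sq_norm_inner_apply [Fintype ι] (b : OrthonormalBasis ι 𝕜 E)
    {T : E →ₗ[𝕜] E} (hT : T.IsSymmetric) (j : ι) :
    ∑ i, ‖⟪b j, T (b i)⟫_𝕜‖ ^ 2 = ‖T (b j)‖ ^ 2 := by
  simp only [← hT (b j), b.sum_sq_norm_inner_left]

lemma LinearMap.IsSymmetric.sum_sq_norm_mul_sq_norm_inner_normalized [Fintype ι]
    (b : OrthonormalBasis ι 𝕜 E) {T : E →ₗ[𝕜] E} (hT : T.IsSymmetric) (j : ι) :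
    ∑ i, ‖T (b i)‖ ^ 2 * ‖⟪b j, ((‖T (b i)‖⁻¹ : ℝ) : 𝕜) • T (b i)⟫_𝕜‖ ^ 2 = ‖T (b j)‖ ^ 2 := by
  simp only [norm_sq_mul_norm_inner_inv_norm_smul_sq, hT.sum_sq_norm_inner_apply b]

end

namespace Matrix
variable {𝕜 n : Type*} [RCLike 𝕜] [Fintype n] [DecidableEq n]

theorem exp_smul_eq_exp_half_smul_mul_self (t : 𝕜) (A : Matrix n n 𝕜) :
    exp (t • A) = exp ((t / 2) • A) * exp ((t / 2) • A) := by
  rw [← exp_add_of_commute _ _ (Commute.refl _), ← add_smul, add_halves]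

lemma IsHermitian.exp_real_smul {H : Matrix n n 𝕜} (hH : H.IsHermitian) (t : ℝ) :
    (NormedSpace.exp ((t : 𝕜) • H)).IsHermitian :=
  (hH.smul (RCLike.conj_ofReal t)).exp

lemma toEuclideanLin_exp_injective (A : Matrix n n 𝕜) :
    Function.Injective (toEuclideanLin (exp A)) :=
  ((Module.End.isUnit_iff _).mp ((isUnit_exp A).map (toLpLinAlgEquiv 2))).injective

end Matrix

/-- Correctness of METTS sampling: with `P_i = ⟨e_i, exp(−βH) e_i⟩` (positive real) and
METTS vectors `φ_i = P_i^{−1/2}·exp(−(β/2)H) e_i`, one has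
`Σ_i P_i·|⟨e_{i′}, φ_i⟩|² = P_{i′}` for every `i′`; hence the collapse Markov chain with
transition probabilities `p(i → i′) = |⟨e_{i′}, φ_i⟩|²` leaves the Gibbs distribution
invariant. -/
theorem metts_markov_chain_preserves_gibbs_distribution
    {N : ℕ} (H : Matrix (Fin N) (Fin N) ℂ) (hH : H.IsHermitian) (β : ℝ)
    (e : OrthonormalBasis (Fin N) ℂ (EuclideanSpace ℂ (Fin N)))
    (P : Fin N → ℝ)
    (hP : P = fun i =>
      RCLike.re (⟪e i, Matrix.toEuclideanLin (exp ((-(β : ℂ)) • H)) (e i)⟫_ℂ))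
    (φ : Fin N → EuclideanSpace ℂ (Fin N))
    (hφ : φ = fun i => (Real.sqrt (P i))⁻¹ •
      Matrix.toEuclideanLin (exp ((-((β : ℂ) / 2)) • H)) (e i)) :
    (∀ i, 0 < P i ∧
      (⟪e i, Matrix.toEuclideanLin (exp ((-(β : ℂ)) • H)) (e i)⟫_ℂ).im = 0) ∧
    (∀ i' : Fin N, ∑ i, P i * ‖⟪e i', φ i⟫_ℂ‖ ^ 2 = P i') := by
  set T := Matrix.toEuclideanLin (exp ((-((β : ℂ) / 2)) • H))
  have hT : T.IsSymmetric := Matrix.isSymmetric_toEuclideanLin_iff.mpr <| by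
    simpa [neg_div] using hH.exp_real_smul (-(β / 2))
  have hinner : ∀ i, ⟪e i, Matrix.toEuclideanLin (exp ((-(β : ℂ)) • H)) (e i)⟫_ℂ
      = ((‖T (e i)‖ ^ 2 : ℝ) : ℂ) := fun i => by
    rw [Matrix.exp_smul_eq_exp_half_smul_mul_self, neg_div, Matrix.toLpLin_mul_same,
      LinearMap.comp_apply]
    exact hT.inner_apply_apply_self _
  have hPT : ∀ i, P i = ‖T (e i)‖ ^ 2 := fun i => by
    simp only [hP, hinner, RCLike.re_to_complex, Complex.ofReal_re]
  refine ⟨fun i => ⟨?_, by rw [hinner, Complex.ofReal_im]⟩, fun j => ?_⟩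
  · have hTe : T (e i) ≠ 0 :=
      (map_ne_zero_iff T (Matrix.toEuclideanLin_exp_injective _)).mpr (e.orthonormal.ne_zero i)
    rw [hPT]
    positivity
  · have hφT : ∀ i, φ i = ((‖T (e i)‖⁻¹ : ℝ) : ℂ) • T (e i) := fun i => by
      simp only [hφ, hPT]
      rw [Real.sqrt_sq (norm_nonneg _), Complex.coe_smul]
    simp only [hPT, hφT]
    exact hT.sum_sq_norm_mul_sq_norm_inner_normalized e j
end
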